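/- arXiv:1510.03445 — 2 statements merged into one kernel-verified Lean document; each statement's English description precedes it below -/
import Mathlib

section
/- If σ is a cyclic permutation of a set of size n and τ is any permutation that is a product of k disjoint transpositions, then the permutation στ has at most k+1 cycles. -/
/-!
Count the cycles of a permutation as the blocks of its `SameCycle` partition. Multiplying by a
transposition `swap a b` changes that partition only by splitting or merging the blocks of `a` and
`b`, so it raises the count by at most one. An involution moving `2k` points is a product of `k`
disjoint transpositions, and an `n`-cycle has a single block, whence at most `k + 1` blocks for
`σ * τ`.
-/

open Equiv

/-- The number of cycles of a permutation, counting fixed points as cycles. -/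
def cycleCount {α : Type*} [Fintype α] [DecidableEq α] (σ : Equiv.Perm α) : ℕ :=
  σ.cycleType.card + (Finset.univ.filter fun x => σ x = x).card

namespace Setoid

variable {α : Type*}

def mergeBlocks (s : Setoid α) (a b : α) : Setoid α where
  r x y := s x y ∨ ((s x a ∨ s x b) ∧ (s y a ∨ s y b))
  iseqv := by
    have hinv : ∀ {x y}, s x y → (s x a ∨ s x b) → (s y a ∨ s y b) := fun hxy hx =>
      hx.imp (s.trans (s.symm hxy)) (s.trans (s.symm hxy))
    refine ⟨fun x => Or.inl (s.refl x), ?_, ?_⟩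
    · rintro x y (hxy | ⟨hx, hy⟩)
      exacts [Or.inl (s.symm hxy), Or.inr ⟨hy, hx⟩]
    · rintro x y z (hxy | ⟨hx, hy⟩) (hyz | ⟨hy', hz⟩)
      · exact Or.inl (s.trans hxy hyz)
      · exact Or.inr ⟨hinv (s.symm hxy) hy', hz⟩
      · exact Or.inr ⟨hx, hinv hyz hy⟩
      · exact Or.inr ⟨hx, hz⟩

theorem card_quotient_le_of_le [Finite α] {s t : Setoid α} (h : s ≤ t) :
    Nat.card (Quotient t) ≤ Nat.card (Quotient s) :=
  Nat.card_le_card_of_surjective (map_of_le h) <| by rintro ⟨x⟩; exact ⟨⟦x⟧, rfl⟩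

theorem card_quotient_le_card_quotient_mergeBlocks_add_one [Finite α] (s : Setoid α) (a b : α) :
    Nat.card (Quotient s) ≤ Nat.card (Quotient (s.mergeBlocks a b)) + 1 := by
  classical
  -- Only the block of `b` can collide with the block of `a`; send it to `none`.
  let g : α → Option (Quotient (s.mergeBlocks a b)) := fun x =>
    if s x b ∧ ¬ s x a then none else some ⟦x⟧
  have hg : ∀ x y, s x y → g x = g y := by
    intro x y hxy
    have hb : s x b ↔ s y b := ⟨s.trans (s.symm hxy), s.trans hxy⟩
    have ha : s x a ↔ s y a := ⟨s.trans (s.symm hxy), s.trans hxy⟩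
    simp only [g, hb, ha, Quotient.sound (show s.mergeBlocks a b x y from Or.inl hxy)]
  have hinj : Function.Injective (Quotient.lift g hg) := by
    rintro ⟨x⟩ ⟨y⟩ hxy
    refine Quotient.sound ?_
    change g x = g y at hxy
    simp only [g] at hxy
    split_ifs at hxy with hx hy hy
    · exact s.trans hx.1 (s.symm hy.1)
    · rcases Quotient.eq.1 (Option.some_injective _ hxy) with h | ⟨hxab, hyab⟩
      · exact h
      · have hxa : s x a := hxab.elim id fun hxb => not_not.1 (not_and.1 hx hxb)
        have hya : s y a := hyab.elim id fun hyb => not_not.1 (not_and.1 hy hyb)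
        exact s.trans hxa (s.symm hya)
  simpa [Finite.card_option] using Nat.card_le_card_of_injective _ hinj

end Setoid

namespace Equiv.Perm

variable {α : Type*}

theorem sameCycle_setoid_le_iff {f : Perm α} {r : Setoid α} :
    SameCycle.setoid f ≤ r ↔ ∀ x, r x (f x) := by
  refine ⟨fun h x => h (sameCycle_apply_right.2 (SameCycle.refl f x)), fun h => ?_⟩
  rintro x _ ⟨i, rfl⟩
  induction i using Int.induction_on with
  | zero => exact r.refl x
  | succ i ih => exact r.trans ih (by rw [add_comm, zpow_one_add, mul_apply]; exact h _)
  | pred i ih =>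
    refine r.trans ih (r.symm ?_)
    have := h ((f ^ (-(i : ℤ) - 1)) x)
    rwa [← mul_apply, ← zpow_one_add, add_sub_cancel] at this

theorem sameCycle_setoid_mul_swap_le [DecidableEq α] (f : Perm α) (a b : α) :
    SameCycle.setoid (f * swap a b) ≤ (SameCycle.setoid f).mergeBlocks a b := by
  refine sameCycle_setoid_le_iff.2 fun x => ?_
  have hself : ∀ y, f.SameCycle y y := SameCycle.refl f
  rw [mul_apply]
  by_cases hxa : x = a
  · subst hxa
    rw [swap_apply_left]
    exact Or.inr ⟨Or.inl (hself x), Or.inr (sameCycle_apply_left.2 (hself b))⟩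
  by_cases hxb : x = b
  · subst hxb
    rw [swap_apply_right]
    exact Or.inr ⟨Or.inr (hself x), Or.inl (sameCycle_apply_left.2 (hself a))⟩
  rw [swap_apply_of_ne_of_ne hxa hxb]
  exact Or.inl (sameCycle_apply_right.2 (hself x))

noncomputable def numOrbits (f : Perm α) : ℕ :=
  Nat.card (Quotient (SameCycle.setoid f))

-- `f = (f * swap a b) * swap a b`, so the blocks of `f` are those of `f * swap a b` with at most
-- two of them merged.
theorem numOrbits_mul_swap_le [Finite α] [DecidableEq α] (f : Perm α) (a b : α) :
    numOrbits (f * swap a b) ≤ numOrbits f + 1 := by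
  have hle := sameCycle_setoid_mul_swap_le (f * swap a b) a b
  rw [mul_swap_mul_self] at hle
  exact ((SameCycle.setoid _).card_quotient_le_card_quotient_mergeBlocks_add_one a b).trans
    (Nat.add_le_add_right (Setoid.card_quotient_le_of_le hle) 1)

theorem numOrbits_mul_le [Fintype α] [DecidableEq α] (f τ : Perm α)
    (hτ : ∀ m ∈ τ.cycleType, m = 2) : numOrbits (f * τ) ≤ numOrbits f + τ.cycleType.card := by
  induction τ using cycle_induction_on generalizing f with
  | base_one => simp
  | base_cycles c hc =>
    rw [hc.cycleType] at hτ
    obtain ⟨a, b, -, rfl⟩ := card_support_eq_two.1 (hτ _ (Multiset.mem_singleton_self _))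
    simpa [hc.cycleType] using numOrbits_mul_swap_le f a b
  | induction_disjoint g h hgh _ ihg ihh =>
    rw [hgh.cycleType_mul] at hτ ⊢
    rw [← mul_assoc, Multiset.card_add, ← add_assoc]
    exact (ihh (f * g) fun m hm => hτ m (Multiset.mem_add.2 (Or.inr hm))).trans
      (Nat.add_le_add_right (ihg f fun m hm => hτ m (Multiset.mem_add.2 (Or.inl hm))) _)

theorem cycleCount_le_numOrbits [Fintype α] [DecidableEq α] (f : Perm α) :
    cycleCount f ≤ numOrbits f := by
  let φ : α → f.cycleFactorsFinset ⊕ {x // f x = x} := fun x =>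
    if hx : f x = x then .inr ⟨x, hx⟩
    else .inl ⟨f.cycleOf x, cycleOf_mem_cycleFactorsFinset_iff.2 (mem_support.2 hx)⟩
  have hφ : ∀ x y, f.SameCycle x y → φ x = φ y := by
    intro x y hxy
    by_cases hx : f x = x
    · rw [← hxy.eq_of_left hx]
    · have hy : f y ≠ y := hxy.apply_eq_self_iff.not.1 hx
      simp only [φ, dif_neg hx, dif_neg hy, hxy.cycleOf_eq]
  have hsurj : Function.Surjective (Quotient.lift (s := SameCycle.setoid f) φ hφ) := by
    rintro (⟨c, hc⟩ | ⟨x, hx⟩)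
    · obtain ⟨x, hxc⟩ := (mem_cycleFactorsFinset_iff.1 hc).1.nonempty_support
      have hx : f x ≠ x := mem_support.1 (mem_cycleFactorsFinset_support_le hc hxc)
      refine ⟨⟦x⟧, ?_⟩
      simp [φ, hx, cycle_is_cycleOf hxc hc]
    · exact ⟨⟦x⟧, by simp [φ, hx]⟩
  have := Nat.card_le_card_of_surjective _ hsurj
  simpa [cycleCount, numOrbits, Nat.card_sum, cycleType_def, Fintype.card_subtype] using this

theorem IsCycle.numOrbits_le_one [Fintype α] [DecidableEq α] {f : Perm α} (hf : f.IsCycle)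
    (hsupp : f.support = Finset.univ) : numOrbits f ≤ 1 := by
  have hmoved : ∀ x, f x ≠ x := fun x => mem_support.1 (hsupp ▸ Finset.mem_univ x)
  refine Finite.card_le_one_iff_subsingleton.2 ⟨?_⟩
  rintro ⟨x⟩ ⟨y⟩
  exact Quotient.sound (hf.sameCycle (hmoved x) (hmoved y))

end Equiv.Perm

/-- If `σ` is an `n`-cycle and `τ` is a product of `k` disjoint transpositions,
then `σ * τ` has at most `k + 1` cycles (fixed points counting as cycles). -/
theorem stmt_7 (n k : ℕ) (σ τ : Equiv.Perm (Fin n))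
    (hσ : σ.IsCycle) (hsupp : σ.support = Finset.univ)
    (hτ : τ.cycleType = Multiset.replicate k 2) :
    cycleCount (σ * τ) ≤ k + 1 := by
  have hτ2 : ∀ m ∈ τ.cycleType, m = 2 := hτ ▸ fun _ => Multiset.eq_of_mem_replicate
  calc cycleCount (σ * τ) ≤ Perm.numOrbits (σ * τ) := Perm.cycleCount_le_numOrbits _
    _ ≤ Perm.numOrbits σ + τ.cycleType.card := Perm.numOrbits_mul_le σ τ hτ2
    _ ≤ 1 + k := by
      rw [hτ, Multiset.card_replicate]
      exact Nat.add_le_add_right (hσ.numOrbits_le_one hsupp) k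
    _ = k + 1 := add_comm 1 k
end

section
/- Let σ be a (2j)-cycle and τ₁,…,τ_j disjoint transpositions, and let each τ_i be resolved either by including it or by replacing it with the identity on its support (its alternative resolution). If στ₁⋯τ_j has j+1 cycles, then changing any single τ_i to its alternative resolution decreases the number of cycles. -/
open Equiv

section Orbits
variable {α : Type*} [Fintype α] [DecidableEq α]

open scoped Classical in
/-- The orbit of `x` under `π`, as a finset. -/
noncomputable def orbitF (π : Equiv.Perm α) (x : α) : Finset α :=
  Finset.univ.filter fun y => π.SameCycle x y

open scoped Classical in
lemma mem_orbitF {π : Equiv.Perm α} {x y : α} : y ∈ orbitF π x ↔ π.SameCycle x y := by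
  simp [orbitF]

lemma self_mem_orbitF (π : Equiv.Perm α) (x : α) : x ∈ orbitF π x :=
  mem_orbitF.2 (Equiv.Perm.SameCycle.refl _ _)

lemma orbitF_eq_of_sameCycle {π : Equiv.Perm α} {x y : α} (h : π.SameCycle x y) :
    orbitF π x = orbitF π y := by
  ext z
  simp only [mem_orbitF]
  exact ⟨fun hz => (h.symm).trans hz, fun hz => h.trans hz⟩

/-- The number of orbits of `π`. -/
noncomputable def orbCount (π : Equiv.Perm α) : ℕ :=
  (Finset.univ.image (orbitF π)).card
end Orbits

section A
variable {α : Type*} [Fintype α] [DecidableEq α]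

open scoped Classical in
lemma orbitF_eq_singleton {π : Equiv.Perm α} {x : α} (hx : π x = x) :
    orbitF π x = {x} := by
  ext y
  simp only [mem_orbitF, Finset.mem_singleton]
  constructor
  · rintro ⟨n, rfl⟩
    exact Equiv.Perm.zpow_apply_eq_self_of_apply_eq_self hx n
  · rintro rfl; exact Equiv.Perm.SameCycle.refl _ _

open scoped Classical in
lemma orbitF_eq_support_cycleOf {π : Equiv.Perm α} {x : α} (hx : π x ≠ x) :
    orbitF π x = (π.cycleOf x).support := by
  ext y
  rw [mem_orbitF, Equiv.Perm.mem_support_cycleOf_iff' hx]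

lemma cycleCount_eq_orbCount (π : Equiv.Perm α) : cycleCount π = orbCount π := by
  classical
  have hsplit : (Finset.univ : Finset α) =
      π.support ∪ (Finset.univ.filter fun x => π x = x) := by
    ext x
    simp only [Finset.mem_union, Finset.mem_filter, Equiv.Perm.mem_support,
      Finset.mem_univ, true_and, iff_true]
    tauto
  have himg : Finset.univ.image (orbitF π) =
      (π.support.image (orbitF π)) ∪
        ((Finset.univ.filter fun x => π x = x).image (orbitF π)) := by
    conv_lhs => rw [hsplit]
    exact Finset.image_union _ _
  -- image over fixed points is image of singletons
  have hfix : ((Finset.univ.filter fun x => π x = x).image (orbitF π)) =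
      ((Finset.univ.filter fun x => π x = x).image fun x => ({x} : Finset α)) := by
    apply Finset.image_congr
    intro x hx
    simp only [Finset.mem_coe, Finset.mem_filter] at hx
    exact orbitF_eq_singleton hx.2
  have hfixcard : ((Finset.univ.filter fun x => π x = x).image (orbitF π)).card
      = (Finset.univ.filter fun x => π x = x).card := by
    rw [hfix]
    apply Finset.card_image_of_injective
    intro a b hab
    simpa using hab
  -- image over support equals image of supports of cycle factors
  have hsupp : (π.support.image (orbitF π)) =
      (π.cycleFactorsFinset.image Equiv.Perm.support) := by
    ext s
    simp only [Finset.mem_image]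
    constructor
    · rintro ⟨x, hx, rfl⟩
      refine ⟨π.cycleOf x, Equiv.Perm.cycleOf_mem_cycleFactorsFinset_iff.2 hx, ?_⟩
      rw [orbitF_eq_support_cycleOf (Equiv.Perm.mem_support.1 hx)]
    · rintro ⟨c, hc, rfl⟩
      have hc1 : c.IsCycle := (Equiv.Perm.mem_cycleFactorsFinset_iff.1 hc).1
      obtain ⟨x, hx⟩ := hc1.nonempty_support
      refine ⟨x, ?_, ?_⟩
      · exact Equiv.Perm.mem_cycleFactorsFinset_support_le hc hx
      · have hxs : x ∈ π.support := Equiv.Perm.mem_cycleFactorsFinset_support_le hc hx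
        rw [orbitF_eq_support_cycleOf (Equiv.Perm.mem_support.1 hxs),
          ← Equiv.Perm.cycle_is_cycleOf hx hc]
  have hsuppcard : (π.cycleFactorsFinset.image Equiv.Perm.support).card
      = π.cycleFactorsFinset.card := by
    apply Finset.card_image_of_injOn
    intro c hc d hd hcd
    by_contra hne
    have hdis := Equiv.Perm.cycleFactorsFinset_pairwise_disjoint π hc hd hne
    have hc1 : c.IsCycle := (Equiv.Perm.mem_cycleFactorsFinset_iff.1 hc).1
    obtain ⟨x, hx⟩ := hc1.nonempty_support
    have hx' : x ∈ d.support := hcd ▸ hx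
    have hd2 : _root_.Disjoint c.support d.support :=
      Equiv.Perm.disjoint_iff_disjoint_support.1 hdis
    exact Finset.disjoint_left.1 hd2 hx hx'
  -- the two images are disjoint
  have hdisj : Disjoint (π.support.image (orbitF π))
      ((Finset.univ.filter fun x => π x = x).image (orbitF π)) := by
    rw [Finset.disjoint_left]
    rintro s hs hs'
    rw [hsupp] at hs
    rw [hfix] at hs'
    simp only [Finset.mem_image] at hs hs'
    obtain ⟨c, hc, rfl⟩ := hs
    obtain ⟨x, _, hx2⟩ := hs'
    have hc1 : c.IsCycle := (Equiv.Perm.mem_cycleFactorsFinset_iff.1 hc).1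
    have := hc1.two_le_card_support
    rw [← hx2, Finset.card_singleton] at this
    omega
  have hct : π.cycleType.card = π.cycleFactorsFinset.card := by
    rw [Equiv.Perm.cycleType_def, Multiset.card_map]; rfl
  rw [cycleCount, orbCount, himg, Finset.card_union_of_disjoint hdisj, hfixcard, hsupp,
    hsuppcard, hct]
end A

section BC
variable {α : Type*} [Fintype α] [DecidableEq α]

/-- If `g` factors through `f`, its image is no larger. -/
lemma card_image_le_of_factor {β γ : Type*} [DecidableEq β] [DecidableEq γ]
    (f : α → β) (g : α → γ)
    (h : ∀ x y, f x = f y → g x = g y) :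
    (Finset.univ.image g).card ≤ (Finset.univ.image f).card := by
  classical
  cases isEmpty_or_nonempty α with
  | inl hα => simp [Finset.univ_eq_empty]
  | inr hα =>
    apply Finset.card_le_card_of_surjOn
      (fun b => if hb : ∃ a, f a = b then g hb.choose else g (Classical.arbitrary _))
    intro c hc
    simp only [Finset.coe_image, Set.mem_image] at hc ⊢
    obtain ⟨x, -, rfl⟩ := hc
    refine ⟨f x, ⟨x, by simp⟩, ?_⟩
    have hb : ∃ a, f a = f x := ⟨x, rfl⟩
    rw [dif_pos hb]
    exact h _ _ hb.choose_spec

open scoped Classical in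
lemma orbCount_le_orbCount_mul_swap (π : Equiv.Perm α) (a b : α) :
    orbCount π ≤ orbCount (π * Equiv.swap a b) + 1 := by
  set ρ := π * Equiv.swap a b with hρ
  set J : α → Finset α := fun x =>
    if π.SameCycle a x ∨ π.SameCycle b x then orbitF π a ∪ orbitF π b else orbitF π x
    with hJ
  -- J is constant on π-orbits
  have hJsc : ∀ x y, π.SameCycle x y → J x = J y := by
    intro x y hxy
    by_cases h : π.SameCycle a x ∨ π.SameCycle b x
    · have h' : π.SameCycle a y ∨ π.SameCycle b y := by
        rcases h with h | h
        · exact Or.inl (h.trans hxy)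
        · exact Or.inr (h.trans hxy)
      simp only [hJ, if_pos h, if_pos h']
    · have h' : ¬(π.SameCycle a y ∨ π.SameCycle b y) := by
        rintro (h' | h')
        · exact h (Or.inl (h'.trans hxy.symm))
        · exact h (Or.inr (h'.trans hxy.symm))
      simp only [hJ, if_neg h, if_neg h', orbitF_eq_of_sameCycle hxy]
  -- J is invariant under one application of ρ
  have hstep : ∀ x, J (ρ x) = J x := by
    intro x
    by_cases hxa : x = a
    · have hρx : ρ x = π b := by
        rw [hρ, hxa]; simp [Equiv.Perm.mul_apply, Equiv.swap_apply_left]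
      have hy : π.SameCycle a (π b) ∨ π.SameCycle b (π b) := Or.inr ⟨1, by simp⟩
      have hx : π.SameCycle a x ∨ π.SameCycle b x := by
        rw [hxa]; exact Or.inl (Equiv.Perm.SameCycle.refl _ _)
      rw [hρx]
      simp only [hJ, if_pos hy, if_pos hx]
    · by_cases hxb : x = b
      · have hρx : ρ x = π a := by
          rw [hρ, hxb]; simp [Equiv.Perm.mul_apply, Equiv.swap_apply_right]
        have hy : π.SameCycle a (π a) ∨ π.SameCycle b (π a) := Or.inl ⟨1, by simp⟩
        have hx : π.SameCycle a x ∨ π.SameCycle b x := by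
          rw [hxb]; exact Or.inr (Equiv.Perm.SameCycle.refl _ _)
        rw [hρx]
        simp only [hJ, if_pos hy, if_pos hx]
      · have hρx : ρ x = π x := by
          rw [hρ]; simp [Equiv.Perm.mul_apply, Equiv.swap_apply_of_ne_of_ne hxa hxb]
        rw [hρx]
        exact (hJsc x (π x) ⟨1, by simp⟩).symm
  -- hence J is constant on ρ-orbits
  have hpow : ∀ (n : ℕ) (x : α), J ((ρ ^ n) x) = J x := by
    intro n
    induction n with
    | zero => intro x; simp
    | succ n ih =>
      intro x
      rw [pow_succ, Equiv.Perm.mul_apply, ih (ρ x), hstep x]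
  have hJρ : ∀ x y, ρ.SameCycle x y → J x = J y := by
    rintro x y ⟨n, rfl⟩
    induction n using Int.rec with
    | ofNat n => simpa using (hpow n x).symm
    | negSucc n =>
      have hx : (ρ ^ (n + 1)) ((ρ ^ Int.negSucc n) x) = x := by
        rw [← Equiv.Perm.mul_apply, ← zpow_natCast, ← zpow_add]
        have : (↑(n + 1) : ℤ) + Int.negSucc n = 0 := by
          simp only [Int.negSucc_eq]; push_cast; ring
        rw [this]; simp
      calc J x = J ((ρ ^ (n + 1)) ((ρ ^ Int.negSucc n) x)) := by rw [hx]
        _ = J ((ρ ^ Int.negSucc n) x) := hpow _ _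
  -- counting
  have h2 : (Finset.univ.image J).card ≤ orbCount ρ := by
    apply card_image_le_of_factor (orbitF ρ) J
    intro x y hxy
    have : y ∈ orbitF ρ x := hxy ▸ self_mem_orbitF ρ y
    exact hJρ x y (mem_orbitF.1 this)
  have h1 : orbCount π ≤ (Finset.univ.image J).card + 1 := by
    by_cases hab : orbitF π a = orbitF π b
    · have : Finset.univ.image (orbitF π) = Finset.univ.image J := by
        apply Finset.image_congr
        intro x _
        by_cases h : π.SameCycle a x ∨ π.SameCycle b x
        · have hx : orbitF π x = orbitF π a := by
            rcases h with h | h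
            · exact (orbitF_eq_of_sameCycle h).symm
            · exact ((orbitF_eq_of_sameCycle h).symm).trans hab.symm
          simp only [hJ, if_pos h, hx, ← hab, Finset.union_self]
        · simp only [hJ, if_neg h]
      rw [orbCount, this]; omega
    · have hsub : Finset.univ.image (orbitF π) ⊆
          insert (orbitF π a) (insert (orbitF π b)
            ((Finset.univ.image J).erase (orbitF π a ∪ orbitF π b))) := by
        intro s hs
        simp only [Finset.mem_image] at hs
        obtain ⟨x, -, rfl⟩ := hs
        by_cases h : π.SameCycle a x ∨ π.SameCycle b x
        · rcases h with h | h
          · rw [← orbitF_eq_of_sameCycle h]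
            exact Finset.mem_insert_self _ _
          · rw [← orbitF_eq_of_sameCycle h]
            exact Finset.mem_insert_of_mem (Finset.mem_insert_self _ _)
        · apply Finset.mem_insert_of_mem
          apply Finset.mem_insert_of_mem
          rw [Finset.mem_erase]
          constructor
          · intro heq
            have ha : a ∈ orbitF π x := by
              rw [heq]
              exact Finset.mem_union_left _ (self_mem_orbitF π a)
            exact h (Or.inl (mem_orbitF.1 ha).symm)
          · rw [Finset.mem_image]
            exact ⟨x, Finset.mem_univ x, by simp only [hJ, if_neg h]⟩
      have hmem : orbitF π a ∪ orbitF π b ∈ Finset.univ.image J := by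
        rw [Finset.mem_image]
        refine ⟨a, Finset.mem_univ a, ?_⟩
        simp only [hJ, if_pos (Or.inl (Equiv.Perm.SameCycle.refl π a))]
      have hc0 := Finset.card_le_card hsub
      have hc1 := Finset.card_insert_le (orbitF π a) (insert (orbitF π b)
        ((Finset.univ.image J).erase (orbitF π a ∪ orbitF π b)))
      have hc2 := Finset.card_insert_le (orbitF π b)
        ((Finset.univ.image J).erase (orbitF π a ∪ orbitF π b))
      have hc3 := Finset.card_erase_of_mem hmem
      have hc4 : 1 ≤ (Finset.univ.image J).card := Finset.card_pos.2 ⟨_, hmem⟩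
      rw [orbCount]
      omega
  omega

lemma orbCount_mul_swap_le (π : Equiv.Perm α) (a b : α) :
    orbCount (π * Equiv.swap a b) ≤ orbCount π + 1 := by
  have := orbCount_le_orbCount_mul_swap (π * Equiv.swap a b) a b
  rwa [mul_assoc, Equiv.swap_mul_self, mul_one] at this

end BC

section D
variable {α : Type*} [Fintype α] [DecidableEq α]

lemma cycleCount_mul_swap_le (π : Equiv.Perm α) (a b : α) :
    cycleCount (π * Equiv.swap a b) ≤ cycleCount π + 1 := by
  rw [cycleCount_eq_orbCount, cycleCount_eq_orbCount]
  exact orbCount_mul_swap_le π a b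

lemma cycleCount_mul_list_prod_le (l : List (Equiv.Perm α)) (π : Equiv.Perm α)
    (hl : ∀ x ∈ l, x.IsSwap ∨ x = 1) :
    cycleCount (π * l.prod) ≤ cycleCount π + l.length := by
  induction l generalizing π with
  | nil => simp
  | cons t L ih =>
    rw [List.prod_cons, ← mul_assoc]
    rcases hl t List.mem_cons_self with ht | ht
    · obtain ⟨x, y, hxy, rfl⟩ := ht
      have h1 := ih (π * Equiv.swap x y) fun z hz => hl z (List.mem_cons_of_mem _ hz)
      have h2 := cycleCount_mul_swap_le π x y
      simp only [List.length_cons]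
      omega
    · subst ht
      rw [mul_one]
      have h1 := ih π fun z hz => hl z (List.mem_cons_of_mem _ hz)
      simp only [List.length_cons]
      omega

lemma sign_eq_pow_cycleCount (π : Equiv.Perm α) :
    Equiv.Perm.sign π = (-1 : ℤˣ) ^ (Fintype.card α + cycleCount π) := by
  have h1 := Equiv.Perm.sign_of_cycleType π
  have hsum := Equiv.Perm.sum_cycleType π
  have hsupp : π.support = Finset.univ.filter fun x => ¬ π x = x := by
    ext x; simp [Equiv.Perm.mem_support]
  have h := Finset.card_filter_add_card_filter_not
    (s := (Finset.univ : Finset α)) (p := fun x => π x = x)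
  have hcard : π.support.card + (Finset.univ.filter fun x => π x = x).card
      = Fintype.card α := by
    rw [hsupp]
    rw [Finset.card_univ] at h
    omega
  have hexp : Fintype.card α + cycleCount π =
      (π.cycleType.sum + Multiset.card π.cycleType)
        + 2 * (Finset.univ.filter fun x => π x = x).card := by
    rw [cycleCount, hsum]
    omega
  have h2f : (-1 : ℤˣ) ^ (2 * (Finset.univ.filter fun x => π x = x).card) = 1 := by
    rw [pow_mul]; norm_num
  rw [h1, hexp]
  conv_rhs => rw [pow_add]
  rw [h2f, mul_one]

end D

/-- If `σ` is a `2j`-cycle, `τ₁, …, τ_j` are pairwise disjoint transpositions,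
and `σ * τ₁ ⋯ τ_j` attains the maximal cycle count `j + 1`, then changing any
single `τ i` to the alternative resolution (omitting it) strictly decreases the
number of cycles. -/
theorem stmt_9 (j : ℕ) (σ : Equiv.Perm (Fin (2 * j)))
    (hσ : σ.IsCycle) (hsupp : σ.support = Finset.univ)
    (τ : Fin j → Equiv.Perm (Fin (2 * j)))
    (hswap : ∀ i, (τ i).IsSwap)
    (hdisj : ∀ i i', i ≠ i' → (τ i).Disjoint (τ i'))
    (hmax : cycleCount (σ * (List.ofFn τ).prod) = j + 1) :
    ∀ i : Fin j,
      cycleCount (σ * (List.ofFn fun i' : Fin j =>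
        if i' = i then 1 else τ i').prod) <
        cycleCount (σ * (List.ofFn τ).prod) := by
  intro i
  classical
  set τ' : Fin j → Equiv.Perm (Fin (2 * j)) := fun i' => if i' = i then 1 else τ i' with hτ'
  -- cycle count of σ is 1
  have hccσ : cycleCount σ = 1 := by
    have h1 : σ.cycleType = {σ.support.card} := hσ.cycleType
    have h2 : (Finset.univ.filter fun x => σ x = x) = ∅ := by
      apply Finset.filter_eq_empty_iff.2
      intro x _
      have : x ∈ σ.support := hsupp ▸ Finset.mem_univ x
      exact Equiv.Perm.mem_support.1 this
    rw [cycleCount, h1, h2]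
    simp
  -- upper bound
  have hub : cycleCount (σ * (List.ofFn τ').prod) ≤ 1 + j := by
    have := cycleCount_mul_list_prod_le (List.ofFn τ') σ ?_
    · rwa [List.length_ofFn, hccσ] at this
    · intro x hx
      rw [List.mem_ofFn] at hx
      obtain ⟨i', rfl⟩ := hx
      by_cases h : i' = i
      · right; simp [hτ', h]
      · left; simpa [hτ', h] using hswap i'
  -- sign computation
  have hsτ : ∀ i', Equiv.Perm.sign (τ i') = -1 := by
    intro i'
    obtain ⟨x, y, hxy, h⟩ := hswap i'
    rw [h, Equiv.Perm.sign_swap hxy]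
  have hprodsign : ∀ (f : Fin j → Equiv.Perm (Fin (2 * j))),
      Equiv.Perm.sign (List.ofFn f).prod = ∏ i', Equiv.Perm.sign (f i') := by
    intro f
    have h := map_list_prod Equiv.Perm.sign (List.ofFn f)
    rw [List.map_ofFn] at h
    rw [← List.prod_ofFn]
    exact h
  have hsign : Equiv.Perm.sign (σ * (List.ofFn τ).prod)
      = - Equiv.Perm.sign (σ * (List.ofFn τ').prod) := by
    rw [map_mul, map_mul, hprodsign, hprodsign]
    have e1 : (∏ i', Equiv.Perm.sign (τ i'))
        = -1 * ∏ i' ∈ Finset.univ.erase i, Equiv.Perm.sign (τ i') := by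
      rw [← Finset.mul_prod_erase Finset.univ _ (Finset.mem_univ i), hsτ i]
    have e2 : (∏ i', Equiv.Perm.sign (τ' i'))
        = 1 * ∏ i' ∈ Finset.univ.erase i, Equiv.Perm.sign (τ i') := by
      rw [← Finset.mul_prod_erase Finset.univ _ (Finset.mem_univ i)]
      have : Equiv.Perm.sign (τ' i) = 1 := by simp [hτ']
      rw [this]
      congr 1
      apply Finset.prod_congr rfl
      intro k hk
      have hki : k ≠ i := (Finset.mem_erase.1 hk).1
      simp [hτ', hki]
    rw [e1, e2, one_mul]
    rw [show -(Equiv.Perm.sign σ * ∏ i' ∈ Finset.univ.erase i, Equiv.Perm.sign (τ i'))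
      = -1 * (Equiv.Perm.sign σ * ∏ i' ∈ Finset.univ.erase i, Equiv.Perm.sign (τ i'))
      from (neg_one_mul _).symm]
    exact mul_left_comm _ _ _
  -- parity: the two cycle counts differ
  have hne : cycleCount (σ * (List.ofFn τ').prod) ≠ j + 1 := by
    intro heq
    rw [sign_eq_pow_cycleCount, sign_eq_pow_cycleCount, heq, hmax] at hsign
    have : ((-1 : ℤˣ) ^ (Fintype.card (Fin (2 * j)) + (j + 1)) : ℤˣ)
        = - (-1) ^ (Fintype.card (Fin (2 * j)) + (j + 1)) := hsign
    rcases Int.units_eq_one_or ((-1 : ℤˣ) ^ (Fintype.card (Fin (2 * j)) + (j + 1))) with h | h <;>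
      rw [h] at this <;> exact absurd this (by decide)
  rw [hmax]
  omega
end
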